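/- arXiv:1807.05103 — 6 statements merged into one kernel-verified Lean document; each statement's English description precedes it below -/
import Mathlib

section
/- Nonnegativity of the output-deficiency-based shared information: for a joint distribution P of (S,Y,Z), SI_o(S;Y,Z) = min{ I(S;Y) − δ_o^π(μ,κ), I(S;Z) − δ_o^π(κ,μ) } ≥ 0, i.e., δ_o^π(μ,κ) ≤ I(S;Y) and δ_o^π(κ,μ) ≤ I(S;Z). -/
open Finset Real

section Defs
variable {α β γ : Type*} [Fintype α] [Fintype β] [Fintype γ]

/-- `p` is a probability distribution on a finite type. -/
def IsDist (p : α → ℝ) : Prop := (∀ a, 0 ≤ p a) ∧ ∑ a, p a = 1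

/-- `k` is a channel (stochastic matrix): each row is a distribution. -/
def IsChannel (k : α → β → ℝ) : Prop := ∀ a, IsDist (k a)

/-- Kullback–Leibler divergence (base 2) between distributions on a finite type. -/
noncomputable def klDiv2 (p q : α → ℝ) : ℝ := ∑ a, p a * Real.logb 2 (p a / q a)

/-- Channel composition: `(chComp lam mu) a c = ∑ b, lam b c * mu a b`. -/
def chComp (lam : β → γ → ℝ) (mu : α → β → ℝ) : α → γ → ℝ :=
  fun a c => ∑ b, lam b c * mu a b

/-- Conditional (weighted) KL divergence `D(k ∥ k' | pi)`. -/
noncomputable def condKL (pi : α → ℝ) (k k' : α → β → ℝ) : ℝ :=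
  ∑ a, pi a * klDiv2 (k a) (k' a)

/-- Weighted output deficiency `δ_o^π(μ,κ) = inf_λ D(κ ∥ λ∘μ | π)`. -/
noncomputable def defOut (pi : α → ℝ) (mu : α → γ → ℝ) (kap : α → β → ℝ) : ℝ :=
  sInf {d | ∃ lam : γ → β → ℝ, IsChannel lam ∧ d = condKL pi kap (chComp lam mu)}

/-- Risk of a fixed strategy `rho` used after observing through channel `nu`. -/
noncomputable def riskWith {S O A : Type*} [Fintype S] [Fintype O] [Fintype A]
    (pi : S → ℝ) (nu : S → O → ℝ) (rho : O → A → ℝ) (l : S → A → ℝ) : ℝ :=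
  ∑ s, pi s * ∑ a, chComp rho nu s a * l s a

/-- Optimal Bayes risk `R(π,ν,ℓ)`. -/
noncomputable def bayesRisk {S O A : Type*} [Fintype S] [Fintype O] [Fintype A]
    (pi : S → ℝ) (nu : S → O → ℝ) (l : S → A → ℝ) : ℝ :=
  sInf {r | ∃ rho : O → A → ℝ, IsChannel rho ∧ r = riskWith pi nu rho l}

/-- Total variation distance between distributions on a finite type. -/
noncomputable def tvDist (p q : α → ℝ) : ℝ := (∑ a, |p a - q a|) / 2

end Defs

section Joint
variable {S Y Z : Type*} [Fintype S] [Fintype Y] [Fintype Z]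

noncomputable def margSY (P : S × Y × Z → ℝ) : S × Y → ℝ := fun p => ∑ z, P (p.1, p.2, z)
noncomputable def margSZ (P : S × Y × Z → ℝ) : S × Z → ℝ := fun p => ∑ y, P (p.1, y, p.2)
noncomputable def margYZ (P : S × Y × Z → ℝ) : Y × Z → ℝ := fun p => ∑ s, P (s, p.1, p.2)
noncomputable def margS (P : S × Y × Z → ℝ) : S → ℝ := fun s => ∑ y, ∑ z, P (s, y, z)
noncomputable def margY (P : S × Y × Z → ℝ) : Y → ℝ := fun y => ∑ s, ∑ z, P (s, y, z)
noncomputable def margZ (P : S × Y × Z → ℝ) : Z → ℝ := fun z => ∑ s, ∑ y, P (s, y, z)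

/-- Mutual information `I(S;Y)` (base 2) of the (S,Y)-marginal of `P`. -/
noncomputable def miSY (P : S × Y × Z → ℝ) : ℝ :=
  ∑ s, ∑ y, margSY P (s, y) * Real.logb 2 (margSY P (s, y) / (margS P s * margY P y))

/-- Mutual information `I(S;Z)` (base 2) of the (S,Z)-marginal of `P`. -/
noncomputable def miSZ (P : S × Y × Z → ℝ) : ℝ :=
  ∑ s, ∑ z, margSZ P (s, z) * Real.logb 2 (margSZ P (s, z) / (margS P s * margZ P z))

/-- Conditional mutual information `I(S;Y|Z)` (base 2) under `P`. -/
noncomputable def condMI (P : S × Y × Z → ℝ) : ℝ :=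
  ∑ s, ∑ y, ∑ z,
    P (s, y, z) * Real.logb 2 (P (s, y, z) * margZ P z / (margSZ P (s, z) * margYZ P (y, z)))

/-- The feasible set `Δ_P`: joint distributions with the same (S,Y)- and (S,Z)-marginals as `P`. -/
def marginalPolytope (P : S × Y × Z → ℝ) : Set (S × Y × Z → ℝ) :=
  {Q | IsDist Q ∧ margSY Q = margSY P ∧ margSZ Q = margSZ P}

/-- Minimum-synergy unique information `UI(S;Y\Z) = inf_{Q ∈ Δ_P} I_Q(S;Y|Z)`. -/
noncomputable def UI (P : S × Y × Z → ℝ) : ℝ :=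
  sInf (condMI '' marginalPolytope P)

noncomputable def condYgivenS (P : S × Y × Z → ℝ) : S → Y → ℝ :=
  fun s y => margSY P (s, y) / margS P s
noncomputable def condZgivenS (P : S × Y × Z → ℝ) : S → Z → ℝ :=
  fun s z => margSZ P (s, z) / margS P s
noncomputable def condSgivenY (P : S × Y × Z → ℝ) : Y → S → ℝ :=
  fun y s => margSY P (s, y) / margY P y
noncomputable def condSgivenZ (P : S × Y × Z → ℝ) : Z → S → ℝ :=
  fun z s => margSZ P (s, z) / margZ P z

/-- Weighted input deficiency `δ_i^π(μ̄,κ̄) = inf_{λ̄} ∑_y π_Y(y) D(κ̄_y ∥ (μ̄∘λ̄)_y)`. -/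
noncomputable def defIn {Y' Z' S' : Type*} [Fintype Y'] [Fintype Z'] [Fintype S']
    (piY : Y' → ℝ) (mub : Z' → S' → ℝ) (kab : Y' → S' → ℝ) : ℝ :=
  sInf {d | ∃ lb : Y' → Z' → ℝ, IsChannel lb ∧
    d = ∑ y, piY y * klDiv2 (kab y) (chComp mub lb y)}

end Joint


section Helpers
variable {α β γ : Type*} [Fintype α] [Fintype β] [Fintype γ]

lemma term_lb {p q : ℝ} (hp0 : 0 ≤ p) (hp1 : p ≤ 1) (hq0 : 0 ≤ q) (hq1 : q ≤ 1) :
    p * Real.logb 2 p ≤ p * Real.logb 2 (p / q) := by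
  rcases eq_or_lt_of_le hp0 with h|h
  · simp [← h]
  rcases eq_or_lt_of_le hq0 with h'|h'
  · rw [← h']
    simp only [div_zero, Real.logb_zero, mul_zero]
    exact mul_nonpos_of_nonneg_of_nonpos hp0 (Real.logb_nonpos one_lt_two hp0 hp1)
  · apply mul_le_mul_of_nonneg_left _ hp0
    refine (Real.logb_le_logb one_lt_two h (div_pos h h')).mpr ?_
    calc p = p / 1 := (div_one p).symm
    _ ≤ p / q := by apply div_le_div_of_nonneg_left hp0 h' hq1

lemma klDiv2_lb (p q : β → ℝ) (hp0 : ∀ b, 0 ≤ p b) (hp1 : ∀ b, p b ≤ 1)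
    (hq0 : ∀ b, 0 ≤ q b) (hq1 : ∀ b, q b ≤ 1) :
    ∑ b, p b * Real.logb 2 (p b) ≤ klDiv2 p q := by
  apply Finset.sum_le_sum
  intro b _
  exact term_lb (hp0 b) (hp1 b) (hq0 b) (hq1 b)

lemma IsDist.le_one {p : β → ℝ} (hp : IsDist p) (b : β) : p b ≤ 1 := by
  rw [← hp.2]
  exact Finset.single_le_sum (fun i _ => hp.1 i) (Finset.mem_univ b)

lemma chComp_isChannel {lam : γ → β → ℝ} {mu : α → γ → ℝ}
    (hl : IsChannel lam) (hm : IsChannel mu) : IsChannel (chComp lam mu) := by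
  intro a
  constructor
  · intro b
    exact Finset.sum_nonneg fun c _ => mul_nonneg ((hl c).1 b) ((hm a).1 c)
  · simp only [chComp]
    rw [Finset.sum_comm]
    simp_rw [← Finset.sum_mul]
    simp_rw [(fun c => (hl c).2)]
    simpa using (hm a).2

lemma defOut_le (pi : α → ℝ) (mu : α → γ → ℝ) (kap : α → β → ℝ)
    (hpi : ∀ a, 0 ≤ pi a) (hmu : IsChannel mu) (hkap : IsChannel kap)
    (q : β → ℝ) (hq : IsDist q) :
    defOut pi mu kap ≤ ∑ a, pi a * klDiv2 (kap a) q := by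
  apply csInf_le
  · -- bounded below
    refine ⟨∑ a, pi a * ∑ b, kap a b * Real.logb 2 (kap a b), ?_⟩
    rintro d ⟨lam, hlam, rfl⟩
    unfold condKL
    apply Finset.sum_le_sum
    intro a _
    apply mul_le_mul_of_nonneg_left _ (hpi a)
    exact klDiv2_lb _ _ (hkap a).1 ((hkap a).le_one)
      ((chComp_isChannel hlam hmu a).1) ((chComp_isChannel hlam hmu a).le_one)
  · refine ⟨fun _ b => q b, fun _ => hq, ?_⟩
    have hcc : chComp (fun _ b => q b) mu = fun a b => q b := by
      funext a b
      simp only [chComp, ← Finset.mul_sum, (hmu a).2, mul_one]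
    rw [hcc]
    rfl

end Helpers

/-- nonnegativity of the output-deficiency-based shared information `SI_o`. -/
theorem SIo_nonneg
    {S Y Z : Type*} [Fintype S] [Fintype Y] [Fintype Z]
    [Nonempty S] [Nonempty Y] [Nonempty Z]
    (P : S × Y × Z → ℝ) (hP : IsDist P) (hfull : ∀ s, 0 < margS P s) :
    defOut (margS P) (condZgivenS P) (condYgivenS P) ≤ miSY P ∧
    defOut (margS P) (condYgivenS P) (condZgivenS P) ≤ miSZ P ∧
    0 ≤ min (miSY P - defOut (margS P) (condZgivenS P) (condYgivenS P))
            (miSZ P - defOut (margS P) (condYgivenS P) (condZgivenS P)) := by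

  obtain ⟨hP0, hP1⟩ := hP
  have hPsum : ∑ s, ∑ y, ∑ z, P (s, y, z) = 1 := by
    rw [← hP1, Fintype.sum_prod_type]
    exact Finset.sum_congr rfl fun s _ => (Fintype.sum_prod_type (fun yz : Y × Z => P (s, yz))).symm
  have hSY0 : ∀ s y, 0 ≤ margSY P (s, y) := fun s y =>
    Finset.sum_nonneg fun z _ => hP0 _
  have hSZ0 : ∀ s z, 0 ≤ margSZ P (s, z) := fun s z =>
    Finset.sum_nonneg fun y _ => hP0 _
  have hS0 : ∀ s, 0 ≤ margS P s := fun s => (hfull s).le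
  have hSne : ∀ s, margS P s ≠ 0 := fun s => (hfull s).ne'
  have hsumY : ∀ s, ∑ y, margSY P (s, y) = margS P s := fun s => rfl
  have hsumZ : ∀ s, ∑ z, margSZ P (s, z) = margS P s := fun s => by
    unfold margS margSZ; exact Finset.sum_comm
  have hkapY : IsChannel (condYgivenS P) := by
    intro s
    constructor
    · intro y; exact div_nonneg (hSY0 s y) (hS0 s)
    · unfold condYgivenS
      rw [← Finset.sum_div, hsumY, div_self (hSne s)]
  have hkapZ : IsChannel (condZgivenS P) := by
    intro s
    constructor
    · intro z; exact div_nonneg (hSZ0 s z) (hS0 s)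
    · unfold condZgivenS
      rw [← Finset.sum_div, hsumZ, div_self (hSne s)]
  have hmY : IsDist (margY P) := by
    constructor
    · intro y; exact Finset.sum_nonneg fun s _ => Finset.sum_nonneg fun z _ => hP0 _
    · unfold margY; rw [Finset.sum_comm]; exact hPsum
  have hmZ : IsDist (margZ P) := by
    constructor
    · intro z; exact Finset.sum_nonneg fun s _ => Finset.sum_nonneg fun y _ => hP0 _
    · unfold margZ
      rw [← hPsum]
      rw [Finset.sum_comm]
      exact Finset.sum_congr rfl fun s _ => Finset.sum_comm
  have h1 : defOut (margS P) (condZgivenS P) (condYgivenS P) ≤ miSY P := by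
    have := defOut_le (margS P) (condZgivenS P) (condYgivenS P) hS0 hkapZ hkapY
      (margY P) hmY
    refine this.trans (le_of_eq ?_)
    unfold miSY klDiv2 condYgivenS
    apply Finset.sum_congr rfl
    intro s _
    rw [Finset.mul_sum]
    apply Finset.sum_congr rfl
    intro y _
    rw [div_div, ← mul_assoc, mul_div_cancel₀ _ (hSne s)]
  have h2 : defOut (margS P) (condYgivenS P) (condZgivenS P) ≤ miSZ P := by
    have := defOut_le (margS P) (condYgivenS P) (condZgivenS P) hS0 hkapY hkapZ
      (margZ P) hmZ
    refine this.trans (le_of_eq ?_)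
    unfold miSZ klDiv2 condZgivenS
    apply Finset.sum_congr rfl
    intro s _
    rw [Finset.mul_sum]
    apply Finset.sum_congr rfl
    intro z _
    rw [div_div, ← mul_assoc, mul_div_cancel₀ _ (hSne s)]
  exact ⟨h1, h2, le_min (by linarith) (by linarith)⟩
end

section
/- Nonnegativity of the output-deficiency-based synergy: for a joint distribution P of (S,Y,Z), CI_o(S;Y,Z) = min{ I(S;Y|Z) − δ_o^π(μ,κ), I(S;Z|Y) − δ_o^π(κ,μ) } ≥ 0. -/
open Finset Real

/-! Choosing `λ = P_{Y|Z}` in the definition of `δ_o^π(μ,κ)` makes `λ ∘ μ` the `Y|S`-conditional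
of the coupling `Q = P_{S|Z} P_{Y|Z} P_Z`, so the divergence it attains is `D(P_{SY} ∥ Q_{SY})`.
By the log-sum inequality, marginalizing out `Z` does not increase divergence, so this is at most
`D(P_{SYZ} ∥ Q_{SYZ}) = I(S;Y|Z)`. The other term of the minimum is the same bound with `Y` and `Z`
exchanged. -/

section Gibbs
variable {ι : Type*} [Fintype ι]

lemma sub_le_mul_log_div {p q : ℝ} (hp : 0 ≤ p) (hq : 0 ≤ q) (hpq : 0 < p → 0 < q) :
    p - q ≤ p * log (p / q) := by
  rcases hp.eq_or_lt with rfl | hp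
  · simpa using hq
  have key := one_sub_inv_le_log_of_pos (div_pos hp (hpq hp))
  rw [inv_div] at key
  calc p - q = p * (1 - q / p) := by field_simp
    _ ≤ p * log (p / q) := mul_le_mul_of_nonneg_left key hp.le

lemma sum_mul_logb_div_nonneg {p q : ι → ℝ} (hp : ∀ i, 0 ≤ p i) (hq : ∀ i, 0 ≤ q i)
    (hpq : ∀ i, 0 < p i → 0 < q i) (hsum : ∑ i, q i ≤ ∑ i, p i) :
    0 ≤ ∑ i, p i * logb 2 (p i / q i) := by
  have hlog : 0 ≤ ∑ i, p i * log (p i / q i) :=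
    calc (0 : ℝ) ≤ ∑ i, (p i - q i) := by rw [sum_sub_distrib]; linarith
      _ ≤ _ := sum_le_sum fun i _ => sub_le_mul_log_div (hp i) (hq i) (hpq i)
  simp only [logb, ← mul_div_assoc, ← sum_div]
  exact div_nonneg hlog (log_nonneg one_le_two)

/-- The log-sum inequality. -/
lemma mul_logb_div_le_sum {p q : ι → ℝ} (hp : ∀ i, 0 ≤ p i) (hq : ∀ i, 0 ≤ q i)
    (hpq : ∀ i, 0 < p i → 0 < q i) :
    (∑ i, p i) * logb 2 ((∑ i, p i) / ∑ i, q i) ≤ ∑ i, p i * logb 2 (p i / q i) := by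
  set P := ∑ i, p i
  set Q := ∑ i, q i
  rcases (show 0 ≤ P from sum_nonneg fun i _ => hp i).eq_or_lt with hP | hP
  · have hzero := (sum_eq_zero_iff_of_nonneg fun i _ => hp i).1 hP.symm
    simp [← hP, hzero]
  obtain ⟨j, -, hj⟩ := (sum_pos_iff_of_nonneg fun i _ => hp i).1 hP
  have hQ : 0 < Q := (hpq j hj).trans_le (single_le_sum (fun i _ => hq i) (mem_univ j))
  -- Gibbs against `q` rescaled to the mass of `p`
  have hgibbs := sum_mul_logb_div_nonneg (q := fun i => q i * (P / Q)) hp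
    (fun i => mul_nonneg (hq i) (div_nonneg hP.le hQ.le))
    (fun i hi => mul_pos (hpq i hi) (div_pos hP hQ))
    (by rw [← sum_mul, mul_div_cancel₀ _ hQ.ne'])
  have hterm : ∀ i, p i * logb 2 (p i / (q i * (P / Q)))
      = p i * logb 2 (p i / q i) - p i * logb 2 (P / Q) := by
    intro i
    rcases (hp i).eq_or_lt with hi | hi
    · simp [← hi]
    rw [← div_div, logb_div (div_pos hi (hpq i hi)).ne' (div_pos hP hQ).ne', mul_sub]
  rw [sum_congr rfl fun i _ => hterm i, sum_sub_distrib, ← sum_mul] at hgibbs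
  linarith

end Gibbs

-- `0 ≤ y` covers the junk value `sInf s = 0` of a set unbounded below.
lemma Real.sInf_le_of_mem_of_le_of_nonneg {s : Set ℝ} {x y : ℝ} (hx : x ∈ s) (hxy : x ≤ y)
    (hy : 0 ≤ y) : sInf s ≤ y := by
  by_cases hs : BddBelow s
  · exact (csInf_le hs hx).trans hxy
  · rwa [Real.sInf_of_not_bddBelow hs]

lemma condKL_div_div {α β : Type*} [Fintype α] [Fintype β] {pi : α → ℝ} {p q : α → β → ℝ}
    (hp : ∀ a b, pi a = 0 → p a b = 0) :
    condKL pi (fun a b => p a b / pi a) (fun a b => q a b / pi a)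
      = ∑ a, ∑ b, p a b * logb 2 (p a b / q a b) := by
  simp only [condKL, klDiv2, mul_sum]
  refine sum_congr rfl fun a _ => sum_congr rfl fun b _ => ?_
  by_cases ha : pi a = 0
  · simp [ha, hp a b ha]
  · rw [div_div_div_cancel_right₀ ha]
    field_simp

section Joint
variable {S Y Z : Type*} {P : S × Y × Z → ℝ}

lemma margSZ_nonneg [Fintype Y] (hP : ∀ x, 0 ≤ P x) (s : S) (z : Z) : 0 ≤ margSZ P (s, z) :=
  sum_nonneg fun _ _ => hP _

lemma margYZ_nonneg [Fintype S] (hP : ∀ x, 0 ≤ P x) (y : Y) (z : Z) : 0 ≤ margYZ P (y, z) :=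
  sum_nonneg fun _ _ => hP _

lemma le_margSZ [Fintype Y] (hP : ∀ x, 0 ≤ P x) (s : S) (y : Y) (z : Z) :
    P (s, y, z) ≤ margSZ P (s, z) :=
  single_le_sum (f := fun y => P (s, y, z)) (fun _ _ => hP _) (mem_univ y)

lemma le_margYZ [Fintype S] (hP : ∀ x, 0 ≤ P x) (s : S) (y : Y) (z : Z) :
    P (s, y, z) ≤ margYZ P (y, z) :=
  single_le_sum (f := fun s => P (s, y, z)) (fun _ _ => hP _) (mem_univ s)

lemma margSZ_le_margZ [Fintype S] [Fintype Y] (hP : ∀ x, 0 ≤ P x) (s : S) (z : Z) :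
    margSZ P (s, z) ≤ margZ P z :=
  single_le_sum (f := fun s => margSZ P (s, z)) (fun s _ => margSZ_nonneg hP s z) (mem_univ s)

lemma margSY_eq_zero_of_margS_eq_zero [Fintype Y] [Fintype Z] (hP : ∀ x, 0 ≤ P x) {s : S}
    (hs : margS P s = 0) (y : Y) : margSY P (s, y) = 0 :=
  (sum_eq_zero_iff_of_nonneg fun y _ => sum_nonneg fun z _ => hP (s, y, z)).1 hs y (mem_univ y)

lemma sum_margYZ [Fintype S] [Fintype Y] (z : Z) : ∑ y, margYZ P (y, z) = margZ P z :=
  sum_comm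

variable [Fintype S] [Fintype Y]

/-- `P_{S|Z} P_{Y|Z} P_Z`: the coupling of the (S,Z)- and (Y,Z)-marginals of `P` that makes `S`
and `Y` conditionally independent given `Z`. -/
noncomputable def indepGivenZ (P : S × Y × Z → ℝ) (s : S) (y : Y) (z : Z) : ℝ :=
  margSZ P (s, z) * margYZ P (y, z) / margZ P z

lemma indepGivenZ_nonneg (hP : ∀ x, 0 ≤ P x) (s : S) (y : Y) (z : Z) :
    0 ≤ indepGivenZ P s y z :=
  div_nonneg (mul_nonneg (margSZ_nonneg hP s z) (margYZ_nonneg hP y z))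
    ((margSZ_nonneg hP s z).trans (margSZ_le_margZ hP s z))

lemma indepGivenZ_pos (hP : ∀ x, 0 ≤ P x) {s : S} {y : Y} {z : Z} (h : 0 < P (s, y, z)) :
    0 < indepGivenZ P s y z :=
  have hSZ := h.trans_le (le_margSZ hP s y z)
  div_pos (mul_pos hSZ (h.trans_le (le_margYZ hP s y z))) (hSZ.trans_le (margSZ_le_margZ hP s z))

variable [Fintype Z]

lemma sum_margY : ∑ y, margY P y = ∑ x, P x := by
  simp only [margY, Fintype.sum_prod_type]
  exact sum_comm

lemma sum_margZ : ∑ z, margZ P z = ∑ x, P x := by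
  simp only [margZ, Fintype.sum_prod_type]
  rw [sum_comm]
  exact sum_congr rfl fun s _ => sum_comm

lemma sum_indepGivenZ : ∑ s, ∑ y, ∑ z, indepGivenZ P s y z = ∑ x, P x := by
  have hz : ∀ z, ∑ s, ∑ y, indepGivenZ P s y z = margZ P z := fun z => by
    simp only [indepGivenZ, ← sum_div, ← mul_sum, sum_margYZ, ← sum_mul]
    exact mul_self_div_self _
  rw [← sum_margZ]
  simp only [← hz]
  exact (sum_congr rfl fun s _ => sum_comm).trans sum_comm

lemma condMI_eq_sum_indepGivenZ :
    condMI P = ∑ s, ∑ y, ∑ z, P (s, y, z) * logb 2 (P (s, y, z) / indepGivenZ P s y z) := by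
  simp only [condMI, indepGivenZ, div_div_eq_mul_div]

lemma condMI_nonneg (hP : IsDist P) : 0 ≤ condMI P := by
  have hgibbs := sum_mul_logb_div_nonneg (q := fun x => indepGivenZ P x.1 x.2.1 x.2.2) hP.1
    (fun _ => indepGivenZ_nonneg hP.1 _ _ _) (fun _ => indepGivenZ_pos hP.1)
    (by simp only [Fintype.sum_prod_type, sum_indepGivenZ]; rfl)
  simpa only [condMI_eq_sum_indepGivenZ, Fintype.sum_prod_type] using hgibbs

/-- `P_{Y|Z}`; where `P_Z` vanishes any distribution would do, and `P_Y` is used. -/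
noncomputable def condYgivenZ (P : S × Y × Z → ℝ) (z : Z) (y : Y) : ℝ :=
  if margZ P z = 0 then margY P y else margYZ P (y, z) / margZ P z

lemma isChannel_condYgivenZ (hP : IsDist P) : IsChannel (condYgivenZ P) := by
  intro z
  by_cases hz : margZ P z = 0
  · rw [show condYgivenZ P z = margY P from funext fun y => if_pos hz]
    exact ⟨fun y => sum_nonneg fun s _ => sum_nonneg fun z _ => hP.1 _, sum_margY.trans hP.2⟩
  · rw [show condYgivenZ P z = fun y => margYZ P (y, z) / margZ P z from
      funext fun y => if_neg hz]
    refine ⟨fun y => div_nonneg (margYZ_nonneg hP.1 y z) ?_, ?_⟩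
    · exact sum_nonneg fun s _ => margSZ_nonneg hP.1 s z
    · rw [← sum_div, sum_margYZ, div_self hz]

lemma condYgivenZ_mul_margSZ (hP : ∀ x, 0 ≤ P x) (s : S) (y : Y) (z : Z) :
    condYgivenZ P z y * margSZ P (s, z) = indepGivenZ P s y z := by
  by_cases hz : margZ P z = 0
  · have : margSZ P (s, z) = 0 :=
      le_antisymm (hz ▸ margSZ_le_margZ hP s z) (margSZ_nonneg hP s z)
    simp [indepGivenZ, this]
  · simp only [condYgivenZ, indepGivenZ, hz, if_false]
    ring

lemma chComp_condYgivenZ_condZgivenS (hP : ∀ x, 0 ≤ P x) :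
    chComp (condYgivenZ P) (condZgivenS P) =
      fun s y => (∑ z, indepGivenZ P s y z) / margS P s := by
  funext s y
  simp only [chComp, condZgivenS, mul_div_assoc', condYgivenZ_mul_margSZ hP, sum_div]

lemma condKL_condYgivenZ_le_condMI (hP : ∀ x, 0 ≤ P x) :
    condKL (margS P) (condYgivenS P) (chComp (condYgivenZ P) (condZgivenS P)) ≤ condMI P := by
  unfold condYgivenS
  rw [chComp_condYgivenZ_condZgivenS hP, condKL_div_div (p := fun s y => margSY P (s, y))
    fun s y hs => margSY_eq_zero_of_margS_eq_zero hP hs y, condMI_eq_sum_indepGivenZ]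
  exact sum_le_sum fun s _ => sum_le_sum fun y _ =>
    mul_logb_div_le_sum (fun _ => hP _) (fun z => indepGivenZ_nonneg hP s y z)
      (fun _ => indepGivenZ_pos hP)

theorem defOut_le_condMI (hP : IsDist P) :
    defOut (margS P) (condZgivenS P) (condYgivenS P) ≤ condMI P :=
  Real.sInf_le_of_mem_of_le_of_nonneg ⟨condYgivenZ P, isChannel_condYgivenZ hP, rfl⟩
    (condKL_condYgivenZ_le_condMI hP.1) (condMI_nonneg hP)

end Joint

section Swap
variable {S Y Z : Type*} [Fintype Y] [Fintype Z] (P : S × Y × Z → ℝ)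

lemma margS_swap : margS (fun p : S × Z × Y => P (p.1, p.2.2, p.2.1)) = margS P :=
  funext fun _ => sum_comm

lemma condZgivenS_swap :
    condZgivenS (fun p : S × Z × Y => P (p.1, p.2.2, p.2.1)) = condYgivenS P := by
  funext s y
  simp only [condZgivenS, condYgivenS, margS_swap]
  rfl

lemma condYgivenS_swap :
    condYgivenS (fun p : S × Z × Y => P (p.1, p.2.2, p.2.1)) = condZgivenS P := by
  funext s y
  simp only [condZgivenS, condYgivenS, margS_swap]
  rfl

variable {P} in
lemma IsDist.swap [Fintype S] (hP : IsDist P) :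
    IsDist (fun p : S × Z × Y => P (p.1, p.2.2, p.2.1)) := by
  refine ⟨fun p => hP.1 _, ?_⟩
  rw [← hP.2]
  simp only [Fintype.sum_prod_type]
  exact sum_congr rfl fun s _ => sum_comm

end Swap

theorem CIo_nonneg_general
    {S Y Z : Type*} [Fintype S] [Fintype Y] [Fintype Z]
    (P : S × Y × Z → ℝ) (hP : IsDist P) :
    0 ≤ min (condMI P - defOut (margS P) (condZgivenS P) (condYgivenS P))
            (condMI (fun p : S × Z × Y => P (p.1, p.2.2, p.2.1)) -
              defOut (margS P) (condYgivenS P) (condZgivenS P)) := by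
  have hZ := defOut_le_condMI hP
  have hY := defOut_le_condMI hP.swap
  rw [margS_swap, condZgivenS_swap, condYgivenS_swap] at hY
  exact le_min (sub_nonneg.2 hZ) (sub_nonneg.2 hY)

/-- nonnegativity of the output-deficiency-based synergy `CI_o`. -/
theorem CIo_nonneg
    {S Y Z : Type*} [Fintype S] [Fintype Y] [Fintype Z]
    [Nonempty S] [Nonempty Y] [Nonempty Z]
    (P : S × Y × Z → ℝ) (hP : IsDist P) (hfull : ∀ s, 0 < margS P s) :
    0 ≤ min (condMI P - defOut (margS P) (condZgivenS P) (condYgivenS P))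
            (condMI (fun p : S × Z × Y => P (p.1, p.2.2, p.2.1)) -
              defOut (margS P) (condYgivenS P) (condZgivenS P)) :=
  CIo_nonneg_general P hP
end

section
/- The projected information equals mutual information minus the weighted input deficiency: I_S(Y↘Z) = I(S;Y) − δ_i^π(μ̄,κ̄). Equivalently, Σ_y π_Y(y) min_{Q ∈ conv({μ̄_z : z ∈ Z})} D(κ̄_y ∥ Q) = min over channels λ̄ : Y → P(Z) of Σ_y π_Y(y) D(κ̄_y ∥ (μ̄∘λ̄)_y). -/
open Finset Real

private lemma kl_lb {α : Type*} [Fintype α] (p q : α → ℝ)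
    (hp1 : ∀ a, 0 ≤ p a) (hp2 : ∑ a, p a = 1)
    (hq1 : ∀ a, 0 ≤ q a) (hq2 : ∑ a, q a = 1) :
    ∑ a, p a * Real.logb 2 (p a) ≤ klDiv2 p q := by
  unfold klDiv2
  apply Finset.sum_le_sum
  intro a _
  have hpa : p a ≤ 1 := by
    calc p a ≤ ∑ b, p b := Finset.single_le_sum (fun b _ => hp1 b) (Finset.mem_univ a)
    _ = 1 := hp2
  have hqa : q a ≤ 1 := by
    calc q a ≤ ∑ b, q b := Finset.single_le_sum (fun b _ => hq1 b) (Finset.mem_univ a)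
    _ = 1 := hq2
  rcases eq_or_lt_of_le (hp1 a) with h0 | hpos
  · simp [← h0]
  rcases eq_or_lt_of_le (hq1 a) with hq0 | hqpos
  · rw [← hq0, div_zero, Real.logb_zero, mul_zero]
    have hlog : Real.logb 2 (p a) ≤ 0 := Real.logb_nonpos one_lt_two (hp1 a) hpa
    exact mul_nonpos_of_nonneg_of_nonpos (hp1 a) hlog
  · rw [Real.logb_div (ne_of_gt hpos) (ne_of_gt hqpos)]
    have hlog : Real.logb 2 (q a) ≤ 0 := Real.logb_nonpos one_lt_two (hq1 a) hqa
    nlinarith [hp1 a]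

/-- the projected information equals `I(S;Y)` minus the weighted input
deficiency; equivalently, per-`y` minimization over the convex hull of the columns of
`P_{S|Z}` equals the minimization over channels `λ̄ : Y → P(Z)`. -/
theorem projected_info_eq_defIn
    {S Y Z : Type*} [Fintype S] [Fintype Y] [Fintype Z]
    [Nonempty S] [Nonempty Y] [Nonempty Z]
    (P : S × Y × Z → ℝ) (hP : IsDist P)
    (hY : ∀ y, 0 < margY P y) (hZ : ∀ z, 0 < margZ P z) :
    ∑ y, margY P y *
        sInf {d | ∃ w : Z → ℝ, IsDist w ∧
          d = klDiv2 (condSgivenY P y) (fun s => ∑ z, w z * condSgivenZ P z s)}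
      = defIn (margY P) (condSgivenZ P) (condSgivenY P) := by
  classical
  set piy := margY P with hpiydef
  set κ := condSgivenY P with hκdef
  set μ := condSgivenZ P with hμdef
  -- basic distribution facts
  have hPnn := hP.1
  have hκ1 : ∀ y s, 0 ≤ κ y s := fun y s =>
    div_nonneg (Finset.sum_nonneg fun z _ => hPnn _) (hY y).le
  have hκ2 : ∀ y, ∑ s, κ y s = 1 := by
    intro y
    have : ∑ s, margSY P (s, y) = piy y := rfl
    rw [hκdef]
    simp only [condSgivenY]
    rw [← Finset.sum_div, this, div_self (hY y).ne']
  have hμ1 : ∀ z s, 0 ≤ μ z s := fun z s =>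
    div_nonneg (Finset.sum_nonneg fun _ _ => hPnn _) (hZ z).le
  have hμ2 : ∀ z, ∑ s, μ z s = 1 := by
    intro z
    have h1 : ∑ s, margSZ P (s, z) = margZ P z := by
      simp only [margSZ, margZ]
    rw [hμdef]
    simp only [condSgivenZ]
    rw [← Finset.sum_div, h1, div_self (hZ z).ne']
  have hpiy1 : ∀ y, 0 ≤ piy y := fun y => (hY y).le
  have hpiy2 : ∑ y, piy y = 1 := by
    rw [hpiydef]
    simp only [margY]
    rw [← hP.2, Fintype.sum_prod_type, Finset.sum_comm]
    congr 1; ext y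
    rw [Fintype.sum_prod_type]
  -- mixture distributions
  have hmix1 : ∀ (w : Z → ℝ), IsDist w → ∀ s, 0 ≤ ∑ z, w z * μ z s := by
    intro w hw s
    exact Finset.sum_nonneg fun z _ => mul_nonneg (hw.1 z) (hμ1 z s)
  have hmix2 : ∀ (w : Z → ℝ), IsDist w → ∑ s, ∑ z, w z * μ z s = 1 := by
    intro w hw
    rw [Finset.sum_comm]
    calc ∑ z, ∑ s, w z * μ z s = ∑ z, w z * ∑ s, μ z s := by
          simp [Finset.mul_sum]
    _ = ∑ z, w z := by simp [hμ2]
    _ = 1 := hw.2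
  -- per-y sets and the global set
  set A : Y → Set ℝ := fun y => {d | ∃ w : Z → ℝ, IsDist w ∧
    d = klDiv2 (κ y) (fun s => ∑ z, w z * μ z s)} with hAdef
  set T : Set ℝ := {d | ∃ lb : Y → Z → ℝ, IsChannel lb ∧
    d = ∑ y, piy y * klDiv2 (κ y) (chComp μ lb y)} with hTdef
  -- rewriting chComp in the convenient form
  have hcomp : ∀ (lb : Y → Z → ℝ) (y : Y),
      chComp μ lb y = fun s => ∑ z, lb y z * μ z s := by
    intro lb y
    funext s
    simp only [chComp]
    exact Finset.sum_congr rfl fun z _ => mul_comm _ _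
  -- uniform distribution on Z
  have hcard : (0:ℝ) < (Fintype.card Z : ℝ) := by
    have := Fintype.card_pos (α := Z)
    exact_mod_cast this
  have hu : IsDist (fun _ : Z => (Fintype.card Z : ℝ)⁻¹) := by
    constructor
    · intro z; positivity
    · rw [Finset.sum_const, Finset.card_univ, nsmul_eq_mul, mul_inv_cancel₀ hcard.ne']
  have hAne : ∀ y, (A y).Nonempty := by
    intro y
    exact ⟨_, (fun _ => (Fintype.card Z : ℝ)⁻¹), hu, rfl⟩
  -- lower bounds
  set c : Y → ℝ := fun y => ∑ s, κ y s * Real.logb 2 (κ y s) with hcdef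
  have hAlb : ∀ y, ∀ d ∈ A y, c y ≤ d := by
    rintro y d ⟨w, hw, rfl⟩
    exact kl_lb _ _ (hκ1 y) (hκ2 y) (hmix1 w hw) (hmix2 w hw)
  have hAbdd : ∀ y, BddBelow (A y) := fun y => ⟨c y, fun d hd => hAlb y d hd⟩
  have hTlb : ∀ d ∈ T, ∑ y, piy y * c y ≤ d := by
    rintro d ⟨lb, hlb, rfl⟩
    apply Finset.sum_le_sum
    intro y _
    apply mul_le_mul_of_nonneg_left _ (hpiy1 y)
    rw [hcomp lb y]
    exact kl_lb _ _ (hκ1 y) (hκ2 y) (hmix1 (lb y) (hlb y)) (hmix2 (lb y) (hlb y))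
  have hTne : T.Nonempty :=
    ⟨_, (fun _ _ => (Fintype.card Z : ℝ)⁻¹), fun _ => hu, rfl⟩
  have hTbdd : BddBelow T := ⟨_, hTlb⟩
  -- the two directions
  have dir1 : ∑ y, piy y * sInf (A y) ≤ sInf T := by
    apply le_csInf hTne
    rintro d ⟨lb, hlb, rfl⟩
    apply Finset.sum_le_sum
    intro y _
    apply mul_le_mul_of_nonneg_left _ (hpiy1 y)
    apply csInf_le (hAbdd y)
    exact ⟨lb y, hlb y, by rw [hcomp lb y]⟩
  have dir2 : sInf T ≤ ∑ y, piy y * sInf (A y) := by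
    apply le_of_forall_pos_le_add
    intro ε hε
    have hchoice : ∀ y, ∃ w : Z → ℝ, IsDist w ∧
        klDiv2 (κ y) (fun s => ∑ z, w z * μ z s) < sInf (A y) + ε := by
      intro y
      obtain ⟨d, hd, hdlt⟩ := exists_lt_of_csInf_lt (hAne y)
        (lt_add_of_pos_right (sInf (A y)) hε)
      obtain ⟨w, hw, rfl⟩ := hd
      exact ⟨w, hw, hdlt⟩
    choose w hw1 hw2 using hchoice
    have hmem : (∑ y, piy y * klDiv2 (κ y) (chComp μ w y)) ∈ T :=
      ⟨w, hw1, rfl⟩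
    calc sInf T ≤ ∑ y, piy y * klDiv2 (κ y) (chComp μ w y) := csInf_le hTbdd hmem
    _ ≤ ∑ y, piy y * (sInf (A y) + ε) := by
        apply Finset.sum_le_sum
        intro y _
        apply mul_le_mul_of_nonneg_left _ (hpiy1 y)
        rw [hcomp w y]
        exact (hw2 y).le
    _ = (∑ y, piy y * sInf (A y)) + ε := by
        simp only [mul_add]
        rw [Finset.sum_add_distrib, ← Finset.sum_mul, hpiy2, one_mul]
  exact le_antisymm dir1 dir2
end

section
/- Nonnegativity of the input-deficiency-based shared information: δ_i^π(μ̄,κ̄) ≤ I(S;Y) and δ_i^π(κ̄,μ̄) ≤ I(S;Z), hence SI_i(S;Y,Z) = min{ I(S;Y) − δ_i^π(μ̄,κ̄), I(S;Z) − δ_i^π(κ̄,μ̄) } ≥ 0. -/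
open Finset Real

section Aux
variable {α : Type*} [Fintype α]

lemma dist_le_one' {p : α → ℝ} (hp : IsDist p) (a : α) : p a ≤ 1 := by
  rw [← hp.2]
  exact Finset.single_le_sum (fun i _ => hp.1 i) (Finset.mem_univ a)

lemma klDiv2_ge (p q : α → ℝ) (hp : IsDist p)
    (hq0 : ∀ a, 0 ≤ q a) (hq1 : ∀ a, q a ≤ 1) :
    -((Fintype.card α : ℝ) / Real.log 2) ≤ klDiv2 p q := by
  have hlog2 : (0:ℝ) < Real.log 2 := Real.log_pos one_lt_two
  have step1 : ∀ a, p a * Real.logb 2 (p a) ≤ p a * Real.logb 2 (p a / q a) := by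
    intro a
    rcases eq_or_lt_of_le (hp.1 a) with h | hpa
    · simp [← h]
    rcases eq_or_lt_of_le (hq0 a) with h | hqa
    · rw [← h]
      simp only [div_zero, Real.logb_zero, mul_zero]
      exact mul_nonpos_of_nonneg_of_nonpos (hp.1 a)
        (Real.logb_nonpos one_lt_two (hp.1 a) (dist_le_one' hp a))
    · refine mul_le_mul_of_nonneg_left ?_ (hp.1 a)
      refine Real.logb_le_logb_of_le one_lt_two hpa ?_
      rw [le_div_iff₀ hqa]
      exact mul_le_of_le_one_right (le_of_lt hpa) (hq1 a)
  have step2 : ∀ a, (p a - 1) / Real.log 2 ≤ p a * Real.logb 2 (p a) := by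
    intro a
    rcases eq_or_lt_of_le (hp.1 a) with h | hpa
    · rw [← h]
      have hh : (0 - 1 : ℝ) / Real.log 2 ≤ 0 :=
        div_nonpos_of_nonpos_of_nonneg (by norm_num) hlog2.le
      simpa using hh
    · have h1 : 1 - (p a)⁻¹ ≤ Real.log (p a) := Real.one_sub_inv_le_log_of_pos hpa
      have h2 : p a - 1 ≤ p a * Real.log (p a) := by
        have := mul_le_mul_of_nonneg_left h1 hpa.le
        calc p a - 1 = p a * (1 - (p a)⁻¹) := by field_simp
        _ ≤ p a * Real.log (p a) := this
      rw [Real.logb, ← mul_div_assoc]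
      exact div_le_div_of_nonneg_right h2 hlog2.le |>.trans_eq rfl
  calc -((Fintype.card α : ℝ) / Real.log 2)
      ≤ ∑ a, (p a - 1) / Real.log 2 := by
        rw [← Finset.sum_div, Finset.sum_sub_distrib, hp.2, Finset.sum_const, card_univ,
          show -((Fintype.card α : ℝ) / Real.log 2)
            = (-(Fintype.card α : ℝ)) / Real.log 2 by ring,
          nsmul_eq_mul, mul_one]
        have : (0:ℝ) ≤ (Fintype.card α : ℝ) := Nat.cast_nonneg _
        exact div_le_div_of_nonneg_right (by linarith) hlog2.le |>.trans_eq rfl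
    _ ≤ ∑ a, p a * Real.logb 2 (p a) := Finset.sum_le_sum fun a _ => step2 a
    _ ≤ klDiv2 p q := Finset.sum_le_sum fun a _ => step1 a

lemma defIn_le_of_channel {Y' Z' S' : Type*} [Fintype Y'] [Fintype Z'] [Fintype S']
    (piY : Y' → ℝ) (mub : Z' → S' → ℝ) (kab : Y' → S' → ℝ)
    (hpi : IsDist piY) (hmub : IsChannel mub) (hkab : IsChannel kab)
    (lb : Y' → Z' → ℝ) (hlb : IsChannel lb) :
    defIn piY mub kab ≤ ∑ y, piY y * klDiv2 (kab y) (chComp mub lb y) := by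
  have key : ∀ lb' : Y' → Z' → ℝ, IsChannel lb' →
      -((Fintype.card S' : ℝ) / Real.log 2)
        ≤ ∑ y, piY y * klDiv2 (kab y) (chComp mub lb' y) := by
    intro lb' hlb'
    have hkl : ∀ y, -((Fintype.card S' : ℝ) / Real.log 2)
        ≤ klDiv2 (kab y) (chComp mub lb' y) := by
      intro y
      have hq0 : ∀ s, 0 ≤ chComp mub lb' y s := fun s =>
        Finset.sum_nonneg fun z _ => mul_nonneg ((hmub z).1 s) ((hlb' y).1 z)
      have hqsum : ∑ s, chComp mub lb' y s = 1 := by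
        unfold chComp
        rw [Finset.sum_comm]
        calc ∑ z, ∑ s, mub z s * lb' y z = ∑ z, (∑ s, mub z s) * lb' y z := by
              simp [Finset.sum_mul]
          _ = ∑ z, lb' y z := by
              refine Finset.sum_congr rfl fun z _ => by rw [(hmub z).2, one_mul]
          _ = 1 := (hlb' y).2
      exact klDiv2_ge _ _ (hkab y) hq0 (dist_le_one' ⟨hq0, hqsum⟩)
    calc -((Fintype.card S' : ℝ) / Real.log 2)
        = ∑ y, piY y * -((Fintype.card S' : ℝ) / Real.log 2) := by
          rw [← Finset.sum_mul, hpi.2, one_mul]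
      _ ≤ ∑ y, piY y * klDiv2 (kab y) (chComp mub lb' y) :=
          Finset.sum_le_sum fun y _ => mul_le_mul_of_nonneg_left (hkl y) (hpi.1 y)
  apply csInf_le
  · exact ⟨-((Fintype.card S' : ℝ) / Real.log 2), by
      rintro d ⟨lb', hlb', rfl⟩; exact key lb' hlb'⟩
  · exact ⟨lb, hlb, rfl⟩

end Aux

/-- nonnegativity of the input-deficiency-based shared information `SI_i`. -/
theorem SIi_nonneg
    {S Y Z : Type*} [Fintype S] [Fintype Y] [Fintype Z]
    [Nonempty S] [Nonempty Y] [Nonempty Z]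
    (P : S × Y × Z → ℝ) (hP : IsDist P)
    (hY : ∀ y, 0 < margY P y) (hZ : ∀ z, 0 < margZ P z) :
    defIn (margY P) (condSgivenZ P) (condSgivenY P) ≤ miSY P ∧
    defIn (margZ P) (condSgivenY P) (condSgivenZ P) ≤ miSZ P ∧
    0 ≤ min (miSY P - defIn (margY P) (condSgivenZ P) (condSgivenY P))
            (miSZ P - defIn (margZ P) (condSgivenY P) (condSgivenZ P)) := by
  have hsum3 : ∑ s, ∑ y, ∑ z, P (s, y, z) = 1 := by
    have h := hP.2
    simpa [Fintype.sum_prod_type] using h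
  have hmargY_sum : ∑ y, margY P y = 1 := by
    unfold margY; rw [Finset.sum_comm]; exact hsum3
  have hmargZ_sum : ∑ z, margZ P z = 1 := by
    unfold margZ
    rw [Finset.sum_comm]
    have hswap : ∀ s : S, ∑ z, ∑ y, P (s, y, z) = ∑ y, ∑ z, P (s, y, z) :=
      fun s => by rw [Finset.sum_comm]
    calc ∑ s, ∑ z, ∑ y, P (s, y, z) = ∑ s, ∑ y, ∑ z, P (s, y, z) :=
        Finset.sum_congr rfl fun s _ => hswap s
      _ = 1 := hsum3
  have hkabY : IsChannel (condSgivenY P) := by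
    intro y
    constructor
    · intro s
      exact div_nonneg (Finset.sum_nonneg fun z _ => hP.1 _) (hY y).le
    · unfold condSgivenY
      rw [← Finset.sum_div, show ∑ s, margSY P (s, y) = margY P y from rfl]
      exact div_self (hY y).ne'
  have hkabZ : IsChannel (condSgivenZ P) := by
    intro z
    constructor
    · intro s
      exact div_nonneg (Finset.sum_nonneg fun y _ => hP.1 _) (hZ z).le
    · unfold condSgivenZ
      rw [← Finset.sum_div, show ∑ s, margSZ P (s, z) = margZ P z from rfl]
      exact div_self (hZ z).ne'
  have hdY : IsDist (margY P) := ⟨fun y => (hY y).le, hmargY_sum⟩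
  have hdZ : IsDist (margZ P) := ⟨fun z => (hZ z).le, hmargZ_sum⟩
  have h1 : defIn (margY P) (condSgivenZ P) (condSgivenY P) ≤ miSY P := by
    have hle := defIn_le_of_channel (margY P) (condSgivenZ P) (condSgivenY P)
      hdY hkabZ hkabY (fun (_ : Y) z => margZ P z) (fun _ => hdZ)
    have hch : ∀ y s, chComp (condSgivenZ P) (fun (_ : Y) z => margZ P z) y s = margS P s := by
      intro y s
      unfold chComp condSgivenZ
      calc ∑ z, margSZ P (s, z) / margZ P z * margZ P z = ∑ z, margSZ P (s, z) :=
          Finset.sum_congr rfl fun z _ => div_mul_cancel₀ _ (hZ z).ne'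
        _ = margS P s := by unfold margSZ margS; rw [Finset.sum_comm]
    have hmi : miSY P = ∑ y, margY P y * klDiv2 (condSgivenY P y)
        (chComp (condSgivenZ P) (fun (_ : Y) z => margZ P z) y) := by
      unfold miSY klDiv2
      rw [Finset.sum_comm]
      refine Finset.sum_congr rfl fun y _ => ?_
      rw [Finset.mul_sum]
      refine Finset.sum_congr rfl fun s _ => ?_
      rw [hch y s]
      unfold condSgivenY
      rw [← mul_assoc, mul_comm (margY P y) (margSY P (s, y) / margY P y),
        div_mul_cancel₀ _ (hY y).ne', div_div, mul_comm (margY P y) (margS P s)]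
    exact hle.trans_eq hmi.symm
  have h2 : defIn (margZ P) (condSgivenY P) (condSgivenZ P) ≤ miSZ P := by
    have hle := defIn_le_of_channel (margZ P) (condSgivenY P) (condSgivenZ P)
      hdZ hkabY hkabZ (fun (_ : Z) y => margY P y) (fun _ => hdY)
    have hch : ∀ z s, chComp (condSgivenY P) (fun (_ : Z) y => margY P y) z s = margS P s := by
      intro z s
      unfold chComp condSgivenY
      calc ∑ y, margSY P (s, y) / margY P y * margY P y = ∑ y, margSY P (s, y) :=
          Finset.sum_congr rfl fun y _ => div_mul_cancel₀ _ (hY y).ne'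
        _ = margS P s := rfl
    have hmi : miSZ P = ∑ z, margZ P z * klDiv2 (condSgivenZ P z)
        (chComp (condSgivenY P) (fun (_ : Z) y => margY P y) z) := by
      unfold miSZ klDiv2
      rw [Finset.sum_comm]
      refine Finset.sum_congr rfl fun z _ => ?_
      rw [Finset.mul_sum]
      refine Finset.sum_congr rfl fun s _ => ?_
      rw [hch z s]
      unfold condSgivenZ
      rw [← mul_assoc, mul_comm (margZ P z) (margSZ P (s, z) / margZ P z),
        div_mul_cancel₀ _ (hZ z).ne', div_div, mul_comm (margZ P z) (margS P s)]
    exact hle.trans_eq hmi.symm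
  exact ⟨h1, h2, le_min (by linarith) (by linarith)⟩
end

section
/- Monotonicity of UI under range restrictions: for jointly distributed finite random variables (S,S',Y,Y',Z), UI((S,S'); (Y,Y') \ Z) ≥ UI(S; Y \ Z). -/
open Finset Real

/-!
Coarsening the first two coordinates along maps `f : A → S`, `g : B → Y` (here the projections
`S × S' → S`, `Y × Y' → Y`) sends the marginal polytope of `P` into that of the coarsened `P`,
and does not increase `I(·;·|Z)`: over each fibre of `(f, g)` the reference
`Q(a|z) Q(b|z) Q(z)` sums to the reference of the coarsened distribution, so the log-sum
inequality applies fibrewise. Coarsening to one-point types, where the conditional mutual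
information vanishes, gives its nonnegativity, so the infimum defining `UI` is over a set
bounded below.
-/

namespace Real

lemma mul_log_le_mul_log_div {a b t : ℝ} (ha : 0 ≤ a) (hb : 0 ≤ b) (ht : 0 < t)
    (hab : b = 0 → a = 0) : a * log t + (a - t * b) ≤ a * log (a / b) := by
  rcases ha.eq_or_lt with rfl | ha
  · simp only [zero_mul, zero_sub, zero_add]
    exact neg_nonpos.mpr (mul_nonneg ht.le hb)
  have hb : 0 < b := hb.lt_of_ne fun h => ha.ne' (hab h.symm)
  have h := log_le_sub_one_of_pos (show 0 < t * b / a by positivity)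
  rw [log_div (by positivity) ha.ne', log_mul ht.ne' hb.ne'] at h
  rw [log_div ha.ne' hb.ne']
  have h' := mul_le_mul_of_nonneg_left h ha.le
  rw [mul_sub (a := a) (c := 1), mul_one, mul_div_cancel₀ _ ha.ne'] at h'
  linarith

lemma log_sum_inequality {ι : Type*} (s : Finset ι) {a b : ι → ℝ} (ha : ∀ i ∈ s, 0 ≤ a i)
    (hb : ∀ i ∈ s, 0 ≤ b i) (hab : ∀ i ∈ s, b i = 0 → a i = 0) :
    (∑ i ∈ s, a i) * log ((∑ i ∈ s, a i) / ∑ i ∈ s, b i) ≤ ∑ i ∈ s, a i * log (a i / b i) := by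
  rcases (sum_nonneg ha).eq_or_lt with hA | hA
  · have ha0 := (sum_eq_zero_iff_of_nonneg ha).mp hA.symm
    rw [← hA, zero_mul, sum_eq_zero fun i hi => by rw [ha0 i hi, zero_mul]]
  have hB : 0 < ∑ i ∈ s, b i := by
    obtain ⟨i, hi, hai⟩ := (sum_pos_iff_of_nonneg ha).mp hA
    have hbi : 0 < b i := (hb i hi).lt_of_ne fun h => hai.ne' (hab i hi h.symm)
    exact hbi.trans_le (single_le_sum hb hi)
  -- at `t = (∑ a) / (∑ b)` the linear terms `∑ (a i - t * b i)` cancel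
  have key := sum_le_sum fun i hi =>
    mul_log_le_mul_log_div (ha i hi) (hb i hi) (div_pos hA hB) (hab i hi)
  rw [sum_add_distrib, sum_sub_distrib, ← sum_mul, ← mul_sum,
    div_mul_cancel₀ _ hB.ne', sub_self, add_zero] at key
  exact key

lemma logb_sum_inequality {ι : Type*} (s : Finset ι) {a b : ι → ℝ} {c : ℝ} (hc : 1 ≤ c)
    (ha : ∀ i ∈ s, 0 ≤ a i) (hb : ∀ i ∈ s, 0 ≤ b i) (hab : ∀ i ∈ s, b i = 0 → a i = 0) :
    (∑ i ∈ s, a i) * logb c ((∑ i ∈ s, a i) / ∑ i ∈ s, b i) ≤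
      ∑ i ∈ s, a i * logb c (a i / b i) := by
  simp only [logb, mul_div_assoc', ← sum_div]
  exact div_le_div_of_nonneg_right (log_sum_inequality s ha hb hab) (log_nonneg hc)

end Real

section CondIndep

variable {S Y Z : Type*}

noncomputable def condIndepProj [Fintype S] [Fintype Y] (Q : S × Y × Z → ℝ) : S × Y × Z → ℝ :=
  fun p => margSZ Q (p.1, p.2.2) * margYZ Q (p.2.1, p.2.2) / margZ Q p.2.2

lemma condMI_eq_sum [Fintype S] [Fintype Y] [Fintype Z] (Q : S × Y × Z → ℝ) :
    condMI Q = ∑ p, Q p * logb 2 (Q p / condIndepProj Q p) := by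
  simp only [condMI, condIndepProj, Fintype.sum_prod_type, div_div_eq_mul_div]

lemma condMI_eq_zero_of_subsingleton [Fintype S] [Fintype Y] [Fintype Z] [Subsingleton S]
    [Subsingleton Y] (Q : S × Y × Z → ℝ) : condMI Q = 0 := by
  refine sum_eq_zero fun s _ => sum_eq_zero fun y _ => sum_eq_zero fun z _ => ?_
  have hSZ : margSZ Q (s, z) = Q (s, y, z) := Fintype.sum_subsingleton _ y
  have hYZ : margYZ Q (y, z) = Q (s, y, z) := Fintype.sum_subsingleton _ s
  have hZ : margZ Q z = Q (s, y, z) := by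
    rw [margZ, Fintype.sum_subsingleton _ s, Fintype.sum_subsingleton _ y]
  rw [hSZ, hYZ, hZ]
  rcases eq_or_ne (Q (s, y, z)) 0 with h | h
  · rw [h, zero_mul]
  · rw [div_self (mul_ne_zero h h), logb_one, mul_zero]

variable [Fintype S] [Fintype Y] {Q : S × Y × Z → ℝ}

lemma condIndepProj_nonneg (hQ : ∀ p, 0 ≤ Q p) (p : S × Y × Z) : 0 ≤ condIndepProj Q p :=
  div_nonneg (mul_nonneg (sum_nonneg fun _ _ => hQ _) (sum_nonneg fun _ _ => hQ _))
    (sum_nonneg fun _ _ => sum_nonneg fun _ _ => hQ _)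

lemma eq_zero_of_condIndepProj_eq_zero (hQ : ∀ p, 0 ≤ Q p) {p : S × Y × Z}
    (h : condIndepProj Q p = 0) : Q p = 0 := by
  obtain ⟨s, y, z⟩ := p
  by_contra hne
  have hq : 0 < Q (s, y, z) := (hQ _).lt_of_ne' hne
  have hSZ : 0 < margSZ Q (s, z) :=
    hq.trans_le (single_le_sum (fun y _ => hQ (s, y, z)) (mem_univ y))
  have hYZ : 0 < margYZ Q (y, z) :=
    hq.trans_le (single_le_sum (fun s _ => hQ (s, y, z)) (mem_univ s))
  have hZ : 0 < margZ Q z := hSZ.trans_le <|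
    single_le_sum (f := fun s => margSZ Q (s, z)) (fun s _ => sum_nonneg fun y _ => hQ (s, y, z))
      (mem_univ s)
  exact (div_pos (mul_pos hSZ hYZ) hZ).ne' h

end CondIndep

section Coarsening

variable {A B S Y Z : Type*} [Fintype A] [Fintype B] [DecidableEq S] [DecidableEq Y]

noncomputable def coarsen (f : A → S) (g : B → Y) (Q : A × B × Z → ℝ) : S × Y × Z → ℝ :=
  fun q => ∑ a with f a = q.1, ∑ b with g b = q.2.1, Q (a, b, q.2.2)

variable (f : A → S) (g : B → Y)

lemma sum_eq_sum_coarsen_fibers [Fintype S] [Fintype Y] [Fintype Z] (F : A × B × Z → ℝ) :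
    ∑ p, F p = ∑ q : S × Y × Z, ∑ a with f a = q.1, ∑ b with g b = q.2.1, F (a, b, q.2.2) := by
  classical
  rw [← sum_fiberwise _ (fun p : A × B × Z => (f p.1, g p.2.1, p.2.2))]
  refine sum_congr rfl fun ⟨s, y, z⟩ _ => ?_
  simp [sum_filter, Fintype.sum_prod_type, ite_and]

variable (Q : A × B × Z → ℝ)

lemma isDist_coarsen [Fintype S] [Fintype Y] [Fintype Z] (hQ : IsDist Q) :
    IsDist (coarsen f g Q) :=
  ⟨fun _ => sum_nonneg fun _ _ => sum_nonneg fun _ _ => hQ.1 _,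
    (sum_eq_sum_coarsen_fibers f g Q).symm.trans hQ.2⟩

lemma margSY_coarsen [Fintype Z] (s : S) (y : Y) :
    margSY (coarsen f g Q) (s, y) = ∑ a with f a = s, ∑ b with g b = y, margSY Q (a, b) := by
  simp only [margSY, coarsen]
  rw [sum_comm]
  exact sum_congr rfl fun _ _ => sum_comm

lemma margSZ_coarsen [Fintype Y] (s : S) (z : Z) :
    margSZ (coarsen f g Q) (s, z) = ∑ a with f a = s, margSZ Q (a, z) := by
  simp only [margSZ, coarsen]
  rw [sum_comm]
  exact sum_congr rfl fun _ _ => sum_fiberwise _ g _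

lemma margYZ_coarsen [Fintype S] (y : Y) (z : Z) :
    margYZ (coarsen f g Q) (y, z) = ∑ b with g b = y, margYZ Q (b, z) := by
  simp only [margYZ, coarsen]
  rw [sum_fiberwise _ f (fun a => ∑ b with g b = y, Q (a, b, z))]
  exact sum_comm

lemma margZ_coarsen [Fintype S] [Fintype Y] (z : Z) :
    margZ (coarsen f g Q) z = margZ Q z := by
  change ∑ s, margSZ (coarsen f g Q) (s, z) = ∑ a, margSZ Q (a, z)
  simp only [margSZ_coarsen]
  exact sum_fiberwise _ f _

lemma coarsen_mem_marginalPolytope [Fintype S] [Fintype Y] [Fintype Z] {P : A × B × Z → ℝ}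
    (hQ : Q ∈ marginalPolytope P) : coarsen f g Q ∈ marginalPolytope (coarsen f g P) := by
  obtain ⟨hdist, hSY, hSZ⟩ := hQ
  refine ⟨isDist_coarsen f g Q hdist, funext fun ⟨s, y⟩ => ?_, funext fun ⟨s, z⟩ => ?_⟩
  · rw [margSY_coarsen, margSY_coarsen, hSY]
  · rw [margSZ_coarsen, margSZ_coarsen, hSZ]

lemma sum_condIndepProj_coarsen_fibers [Fintype S] [Fintype Y] (s : S) (y : Y) (z : Z) :
    ∑ a with f a = s, ∑ b with g b = y, condIndepProj Q (a, b, z) =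
      condIndepProj (coarsen f g Q) (s, y, z) := by
  simp only [condIndepProj, margSZ_coarsen, margYZ_coarsen, margZ_coarsen, sum_mul_sum,
    sum_div]

lemma condMI_coarsen_le [Fintype S] [Fintype Y] [Fintype Z] (hQ : ∀ p, 0 ≤ Q p) :
    condMI (coarsen f g Q) ≤ condMI Q := by
  rw [condMI_eq_sum, condMI_eq_sum Q, sum_eq_sum_coarsen_fibers f g]
  refine sum_le_sum fun ⟨s, y, z⟩ _ => ?_
  have h := logb_sum_inequality (({a | f a = s} : Finset A) ×ˢ ({b | g b = y} : Finset B))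
    (a := fun ab => Q (ab.1, ab.2, z)) (b := fun ab => condIndepProj Q (ab.1, ab.2, z))
    one_le_two (fun _ _ => hQ _) (fun _ _ => condIndepProj_nonneg hQ _)
    (fun _ _ => eq_zero_of_condIndepProj_eq_zero hQ)
  simp only [sum_product] at h
  rwa [sum_condIndepProj_coarsen_fibers] at h

end Coarsening

lemma condMI_nonneg_s11 {S Y Z : Type*} [Fintype S] [Fintype Y] [Fintype Z] {Q : S × Y × Z → ℝ}
    (hQ : ∀ p, 0 ≤ Q p) : 0 ≤ condMI Q :=
  condMI_eq_zero_of_subsingleton (coarsen (fun _ : S => ()) (fun _ : Y => ()) Q) ▸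
    condMI_coarsen_le _ _ Q hQ

section UI

variable {S Y Z : Type*} [Fintype S] [Fintype Y] [Fintype Z] {P Q : S × Y × Z → ℝ}

lemma UI_le_condMI (hQ : Q ∈ marginalPolytope P) : UI P ≤ condMI Q :=
  csInf_le ⟨0, by rintro _ ⟨R, hR, rfl⟩; exact condMI_nonneg_s11 hR.1.1⟩ ⟨Q, hQ, rfl⟩

lemma le_UI {c : ℝ} (hP : IsDist P) (h : ∀ Q ∈ marginalPolytope P, c ≤ condMI Q) : c ≤ UI P :=
  le_csInf ⟨_, P, ⟨hP, rfl, rfl⟩, rfl⟩ fun _ ⟨Q, hQ, hd⟩ => hd ▸ h Q hQ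

end UI

lemma UI_coarsen_le {A B S Y Z : Type*} [Fintype A] [Fintype B] [Fintype S] [Fintype Y]
    [Fintype Z] [DecidableEq S] [DecidableEq Y] (f : A → S) (g : B → Y) {P : A × B × Z → ℝ}
    (hP : IsDist P) : UI (coarsen f g P) ≤ UI P :=
  le_UI hP fun Q hQ =>
    (UI_le_condMI (coarsen_mem_marginalPolytope f g Q hQ)).trans (condMI_coarsen_le f g Q hQ.1.1)

lemma coarsen_fst_fst {S S' Y Y' Z : Type*} [Fintype S] [Fintype S'] [Fintype Y] [Fintype Y']
    [DecidableEq S] [DecidableEq Y] (Q : (S × S') × (Y × Y') × Z → ℝ) :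
    coarsen Prod.fst Prod.fst Q = fun p => ∑ s', ∑ y', Q ((p.1, s'), (p.2.1, y'), p.2.2) := by
  funext ⟨s, y, z⟩
  simp only [coarsen, sum_filter, Fintype.sum_prod_type]
  rw [sum_comm]
  simp only [sum_ite_eq', mem_univ, if_true]
  refine sum_congr rfl fun _ _ => ?_
  rw [sum_comm]
  simp only [sum_ite_eq', mem_univ, if_true]

/-- monotonicity of `UI` under range restrictions:
`UI((S,S');(Y,Y')\Z) ≥ UI(S;Y\Z)`. -/
theorem UI_mono_range_restriction
    {S S' Y Y' Z : Type*} [Fintype S] [Fintype S'] [Fintype Y] [Fintype Y'] [Fintype Z]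
    (P : (S × S') × (Y × Y') × Z → ℝ) (hP : IsDist P) :
    UI (fun p : S × Y × Z => ∑ s' : S', ∑ y' : Y', P ((p.1, s'), (p.2.1, y'), p.2.2)) ≤
      UI P := by
  classical
  rw [← coarsen_fst_fst]
  exact UI_coarsen_le Prod.fst Prod.fst hP
end

section
/- Coupling lemma for the marginal polytope: let P, P' be probability distributions on S×Y×Z (finite). For any Q ∈ Δ_P there exists Q' ∈ Δ_{P'} with ‖Q − Q'‖₁ ≤ 5‖P − P'‖₁, where Δ_R denotes the set of joint distributions whose (S,Y)- and (S,Z)-marginals agree with those of R. -/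
open Finset Real

/-!
Fix `s` and view `Q(s,·,·)` as a nonnegative `Y × Z` matrix; its row and column sums are the
marginals of `P` at `s`, which differ from those of `P'` by some `A` and `B` in `ℓ¹`. Scaling down
the rows that are too heavy and then the columns that are too heavy removes mass `≤ A + B`; the
remaining row and column deficits `d`, `e` have the same total `D ≤ 2A + B` and are filled with
`d ⊗ e / D`. This moves `Q` by at most `3A + 2B`, and marginalising is an `ℓ¹`-contraction, so
`A, B ≤ ‖P - P'‖₁`.
-/

section Transport

variable {ι Y Z : Type*} [Fintype ι] [Fintype Y] [Fintype Z]

lemma exists_nonneg_le_sum_eq_min {v : ι → ℝ} (hv : ∀ i, 0 ≤ v i) {c : ℝ} (hc : 0 ≤ c) :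
    ∃ w : ι → ℝ, (∀ i, 0 ≤ w i ∧ w i ≤ v i) ∧ ∑ i, w i = min c (∑ i, v i) := by
  have hsum : 0 ≤ ∑ i, v i := sum_nonneg fun i _ => hv i
  rcases hsum.eq_or_lt with h0 | hpos
  · exact ⟨0, fun i => ⟨le_rfl, hv i⟩, by simp [← h0, hc]⟩
  set t := min c (∑ i, v i) / ∑ i, v i
  have ht0 : 0 ≤ t := div_nonneg (le_min hc hsum) hsum
  have ht1 : t ≤ 1 := (div_le_one hpos).2 (min_le_right _ _)
  refine ⟨fun i => t * v i, fun i => ⟨mul_nonneg ht0 (hv i), ?_⟩, ?_⟩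
  · exact mul_le_of_le_one_left (hv i) ht1
  · rw [← mul_sum, div_mul_cancel₀ _ hpos.ne']

lemma sub_min_le_abs_sub {x y c : ℝ} (h : x ≤ y) : x - min c x ≤ |c - y| := by
  rcases le_total c x with hcx | hxc
  · rw [min_eq_left hcx, abs_sub_comm]; linarith [le_abs_self (y - c)]
  · rw [min_eq_right hxc, sub_self]; exact abs_nonneg _

lemma exists_le_with_sums_le {q : Y → Z → ℝ} {a : Y → ℝ} {b : Z → ℝ} (hq : ∀ y z, 0 ≤ q y z)
    (ha : ∀ y, 0 ≤ a y) (hb : ∀ z, 0 ≤ b z) :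
    ∃ p : Y → Z → ℝ, (∀ y z, 0 ≤ p y z ∧ p y z ≤ q y z) ∧ (∀ y, ∑ z, p y z ≤ a y) ∧
      (∀ z, ∑ y, p y z ≤ b z) ∧
      ∑ y, ∑ z, (q y z - p y z) ≤ ∑ y, |a y - ∑ z, q y z| + ∑ z, |b z - ∑ y, q y z| := by
  choose r hr hrow using fun y => exists_nonneg_le_sum_eq_min (hq y) (ha y)
  choose c hc hcol using fun z => exists_nonneg_le_sum_eq_min (fun y => (hr y z).1) (hb z)
  refine ⟨fun y z => c z y, fun y z => ⟨(hc z y).1, (hc z y).2.trans (hr y z).2⟩,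
    fun y => ?_, fun z => (hcol z).trans_le (min_le_left _ _), ?_⟩
  · calc ∑ z, c z y ≤ ∑ z, r y z := sum_le_sum fun z _ => (hc z y).2
      _ ≤ a y := (hrow y).trans_le (min_le_left _ _)
  have hsplit : ∑ y, ∑ z, (q y z - c z y)
      = ∑ y, (∑ z, q y z - ∑ z, r y z) + ∑ z, (∑ y, r y z - ∑ y, c z y) := by
    simp only [← sum_sub_distrib]
    rw [sum_comm (f := fun z y => r y z - c z y), ← sum_add_distrib]
    exact sum_congr rfl fun y _ => by rw [← sum_add_distrib]; simp
  rw [hsplit]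
  gcongr with y _ z _
  · rw [hrow]; exact sub_min_le_abs_sub le_rfl
  · rw [hcol]; exact sub_min_le_abs_sub (sum_le_sum fun y _ => (hr y z).2)

lemma exists_nonneg_with_sums {d : Y → ℝ} {e : Z → ℝ} (hd : ∀ y, 0 ≤ d y) (he : ∀ z, 0 ≤ e z)
    (hde : ∑ y, d y = ∑ z, e z) :
    ∃ m : Y → Z → ℝ, (∀ y z, 0 ≤ m y z) ∧ (∀ y, ∑ z, m y z = d y) ∧ ∀ z, ∑ y, m y z = e z := by
  set D := ∑ y, d y
  rcases (sum_nonneg fun y _ => hd y : 0 ≤ D).eq_or_lt with h0 | hpos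
  · have hd0 := (sum_eq_zero_iff_of_nonneg fun y _ => hd y).1 h0.symm
    have he0 := (sum_eq_zero_iff_of_nonneg fun z _ => he z).1 (hde.symm.trans h0.symm)
    exact ⟨0, fun _ _ => le_rfl, fun y => by simp [hd0 y (mem_univ y)],
      fun z => by simp [he0 z (mem_univ z)]⟩
  refine ⟨fun y z => d y * e z / D, fun y z => div_nonneg (mul_nonneg (hd y) (he z)) hpos.le,
    fun y => ?_, fun z => ?_⟩
  · rw [← sum_div, ← mul_sum, ← hde, mul_div_cancel_right₀ _ hpos.ne']
  · rw [← sum_div, ← sum_mul, mul_div_cancel_left₀ _ hpos.ne']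

theorem exists_with_sums_near {q : Y → Z → ℝ} {a : Y → ℝ} {b : Z → ℝ} (hq : ∀ y z, 0 ≤ q y z)
    (ha : ∀ y, 0 ≤ a y) (hb : ∀ z, 0 ≤ b z) (hab : ∑ y, a y = ∑ z, b z) :
    ∃ r : Y → Z → ℝ, (∀ y z, 0 ≤ r y z) ∧ (∀ y, ∑ z, r y z = a y) ∧ (∀ z, ∑ y, r y z = b z) ∧
      ∑ y, ∑ z, |q y z - r y z|
        ≤ 3 * ∑ y, |a y - ∑ z, q y z| + 2 * ∑ z, |b z - ∑ y, q y z| := by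
  obtain ⟨p, hp, hprow, hpcol, hpq⟩ := exists_le_with_sums_le hq ha hb
  have hdefect : ∑ y, (a y - ∑ z, p y z) = ∑ z, (b z - ∑ y, p y z) := by
    rw [sum_sub_distrib, sum_sub_distrib, hab, sum_comm]
  obtain ⟨m, hm, hmrow, hmcol⟩ := exists_nonneg_with_sums (fun y => sub_nonneg.2 (hprow y))
    (fun z => sub_nonneg.2 (hpcol z)) hdefect
  refine ⟨p + m, fun y z => add_nonneg (hp y z).1 (hm y z), fun y => ?_, fun z => ?_, ?_⟩
  · simp [sum_add_distrib, hmrow]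
  · simp [sum_add_distrib, hmcol]
  have hmass : ∑ y, ∑ z, m y z ≤ ∑ y, |a y - ∑ z, q y z| + ∑ y, ∑ z, (q y z - p y z) := by
    rw [← sum_add_distrib]
    gcongr with y
    rw [hmrow, sum_sub_distrib]
    linarith [le_abs_self (a y - ∑ z, q y z)]
  calc ∑ y, ∑ z, |q y z - (p + m) y z| ≤ ∑ y, ∑ z, ((q y z - p y z) + m y z) := by
        gcongr with y _ z _
        rw [Pi.add_apply, Pi.add_apply, abs_le]
        constructor <;> linarith [hp y z, hm y z]
    _ ≤ _ := by
        simp only [sum_add_distrib]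
        linarith

end Transport

section Marginals

variable {S Y Z : Type*} [Fintype S] [Fintype Y] [Fintype Z]

lemma sum_margSY (P : S × Y × Z → ℝ) : ∑ p, margSY P p = ∑ x, P x := by
  simp only [margSY, Fintype.sum_prod_type]

lemma sum_abs_margSY_sub_le (P P' : S × Y × Z → ℝ) :
    ∑ p, |margSY P p - margSY P' p| ≤ ∑ x, |P x - P' x| :=
  calc ∑ p, |margSY P p - margSY P' p|
      ≤ ∑ p : S × Y, ∑ z, |P (p.1, p.2, z) - P' (p.1, p.2, z)| := by
        gcongr with p
        rw [margSY, margSY, ← sum_sub_distrib]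
        exact abs_sum_le_sum_abs _ _
    _ = ∑ x, |P x - P' x| := by simp only [Fintype.sum_prod_type]

lemma sum_abs_margSZ_sub_le (P P' : S × Y × Z → ℝ) :
    ∑ p, |margSZ P p - margSZ P' p| ≤ ∑ x, |P x - P' x| :=
  calc ∑ p, |margSZ P p - margSZ P' p|
      ≤ ∑ p : S × Z, ∑ y, |P (p.1, y, p.2) - P' (p.1, y, p.2)| := by
        gcongr with p
        rw [margSZ, margSZ, ← sum_sub_distrib]
        exact abs_sum_le_sum_abs _ _
    _ = ∑ x, |P x - P' x| := by
        simp only [Fintype.sum_prod_type]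
        exact sum_congr rfl fun s _ => sum_comm

end Marginals

theorem marginalPolytope_coupling_general
    {S Y Z : Type*} [Fintype S] [Fintype Y] [Fintype Z]
    (P P' : S × Y × Z → ℝ) (hP' : IsDist P') :
    ∀ Q ∈ marginalPolytope P, ∃ Q' ∈ marginalPolytope P',
      ∑ x, |Q x - Q' x| ≤ 5 * ∑ x, |P x - P' x| := by
  rintro Q ⟨⟨hQ, -⟩, hQSY, hQSZ⟩
  choose r hr hrow hcol hdist using fun s =>
    exists_with_sums_near (fun y z => hQ (s, y, z))
      (fun y => sum_nonneg fun z _ => hP'.1 (s, y, z))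
      (fun z => sum_nonneg fun y _ => hP'.1 (s, y, z)) sum_comm
  set Q' : S × Y × Z → ℝ := fun x => r x.1 x.2.1 x.2.2
  have hSY : margSY Q' = margSY P' := funext fun p => hrow p.1 p.2
  have hSZ : margSZ Q' = margSZ P' := funext fun p => hcol p.1 p.2
  refine ⟨Q', ⟨⟨fun x => hr _ _ _, ?_⟩, hSY, hSZ⟩, ?_⟩
  · rw [← sum_margSY, hSY, sum_margSY, hP'.2]
  calc ∑ x, |Q x - Q' x| = ∑ s, ∑ y, ∑ z, |Q (s, y, z) - r s y z| := by
        simp only [Q', Fintype.sum_prod_type]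
    _ ≤ ∑ s, (3 * ∑ y, |margSY P' (s, y) - margSY Q (s, y)|
          + 2 * ∑ z, |margSZ P' (s, z) - margSZ Q (s, z)|) := sum_le_sum fun s _ => hdist s
    _ = 3 * ∑ p, |margSY P' p - margSY P p| + 2 * ∑ p, |margSZ P' p - margSZ P p| := by
        simp only [hQSY, hQSZ, sum_add_distrib, ← mul_sum, Fintype.sum_prod_type]
    _ ≤ 3 * ∑ x, |P' x - P x| + 2 * ∑ x, |P' x - P x| := by
        gcongr
        · exact sum_abs_margSY_sub_le P' P
        · exact sum_abs_margSZ_sub_le P' P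
    _ = 5 * ∑ x, |P x - P' x| := by simp only [abs_sub_comm (P' _)]; ring

/-- coupling lemma for the marginal polytope. -/
theorem marginalPolytope_coupling
    {S Y Z : Type*} [Fintype S] [Fintype Y] [Fintype Z]
    (P P' : S × Y × Z → ℝ) (hP : IsDist P) (hP' : IsDist P') :
    ∀ Q ∈ marginalPolytope P, ∃ Q' ∈ marginalPolytope P',
      ∑ x, |Q x - Q' x| ≤ 5 * ∑ x, |P x - P' x| :=
  marginalPolytope_coupling_general P P' hP'
end
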